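/- Let v₀, …, v_n be positive real-valued random variables and let u₁, …, u_n be random variables with values in [0,1], all on a common probability space, and define the backward Metropolis runs A₀, …, A_n and Ŷ_i := 1/A_{n−i}. Suppose each Ŷ_i is integrable, and define the Rao–Blackwellized estimators Y_i := E[Ŷ_i | v₀, …, v_n] (conditional expectation given the σ-algebra generated by the proposed weights). Then Y_i ≤ Y_{i−1} almost surely for every 1 ≤ i ≤ n. -/

import Mathlib

open MeasureTheory

/-- The Metropolis weight update: from current weight `w`, proposed weight `w'`, and
uniform draw `u`, accept the proposal iff `u ≤ min 1 (w'/w)`. -/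
noncomputable def metroF (w w' u : ℝ) : ℝ := if u ≤ min 1 (w' / w) then w' else w

/-- The chain started at index `k`, after `m` steps: `B k = v k`,
`B (k+m+1) = f (B (k+m)) (v (k+m+1)) (u (k+m+1))`. -/
noncomputable def backB (v u : ℕ → ℝ) (k : ℕ) : ℕ → ℝ
  | 0 => v k
  | m + 1 => metroF (backB v u k m) (v (k + m + 1)) (u (k + m + 1))

/-- The backward Metropolis run started at index `k ≤ n`: start at `v k` and apply the
Metropolis updates with proposals `v (k+1), …, v n` and draws `u (k+1), …, u n`; runs
started at different indices share the same pair `(v j, u j)` at each step `j`. -/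
noncomputable def backA (v u : ℕ → ℝ) (n k : ℕ) : ℝ := backB v u k (n - k)

/-!
A Metropolis step never ends below its proposal (a rejection means the proposal was the smaller
weight) and is monotone in the current weight. After one step the run started at `k` is at least
`v (k+1)`, where the run started at `k+1` begins, so by induction along the shared steps
`A (k+1) ≤ A k` pointwise. Hence `1 / A (n-i) ≤ 1 / A (n-i+1)` pointwise, and conditional
expectation preserves the order.
-/

lemma metroF_pos {w w' : ℝ} (u : ℝ) (hw : 0 < w) (hw' : 0 < w') : 0 < metroF w w' u := by
  unfold metroF
  split_ifs
  exacts [hw', hw]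

lemma le_metroF {w u : ℝ} (w' : ℝ) (hw : 0 < w) (hu : u ≤ 1) : w' ≤ metroF w w' u := by
  unfold metroF
  split_ifs with haccept
  · exact le_rfl
  · have hlt : w' / w < 1 :=
      (min_lt_iff.mp ((not_le.mp haccept).trans_le hu)).resolve_left (lt_irrefl 1)
    exact ((div_lt_one hw).mp hlt).le

lemma metroF_mono_left {w₁ w₂ w' u : ℝ} (hw₂ : 0 < w₂) (hw : w₂ ≤ w₁) (hw' : 0 ≤ w')
    (hu : u ≤ 1) : metroF w₂ w' u ≤ metroF w₁ w' u := by
  by_cases haccept₂ : u ≤ min 1 (w' / w₂)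
  · rw [metroF, if_pos haccept₂]
    exact le_metroF w' (hw₂.trans_le hw) hu
  · have hreject₁ : ¬ u ≤ min 1 (w' / w₁) := fun h =>
      haccept₂ (h.trans (min_le_min_left 1 (div_le_div_of_nonneg_left hw' hw₂ hw)))
    rw [metroF, metroF, if_neg haccept₂, if_neg hreject₁]
    exact hw

section backB

variable {v u : ℕ → ℝ}

lemma backB_pos (hv : ∀ k, 0 < v k) (k m : ℕ) : 0 < backB v u k m := by
  induction m with
  | zero => exact hv k
  | succ m ih => exact metroF_pos _ ih (hv _)

lemma backB_succ_le (hv : ∀ k, 0 < v k) (hu : ∀ k, u k ≤ 1) (k m : ℕ) :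
    backB v u (k + 1) m ≤ backB v u k (m + 1) := by
  induction m with
  | zero => exact le_metroF (v (k + 1)) (hv k) (hu _)
  | succ m ih =>
    rw [backB, backB, show k + 1 + m + 1 = k + (m + 1) + 1 by omega]
    exact metroF_mono_left (backB_pos hv _ _) ih (hv _).le (hu _)

lemma backA_pos (hv : ∀ k, 0 < v k) (n k : ℕ) : 0 < backA v u n k :=
  backB_pos hv k _

lemma backA_succ_le (hv : ∀ k, 0 < v k) (hu : ∀ k, u k ≤ 1) {n k : ℕ} (hk : k < n) :
    backA v u n (k + 1) ≤ backA v u n k := by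
  rw [backA, backA, show n - k = n - (k + 1) + 1 by omega]
  exact backB_succ_le hv hu k _

end backB

theorem rbbce_nonincreasing_general
    {Ω : Type*} [MeasurableSpace Ω] (μ : Measure Ω)
    (n : ℕ) (v u : ℕ → Ω → ℝ)
    (hvpos : ∀ k ω, 0 < v k ω) (hu : ∀ k ω, u k ω ∈ Set.Icc (0 : ℝ) 1)
    (hint : ∀ i, i ≤ n → Integrable
      (fun ω => 1 / backA (fun j => v j ω) (fun j => u j ω) n (n - i)) μ)
    (i : ℕ) (hi1 : 1 ≤ i) (hin : i ≤ n) :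
    μ[fun ω => 1 / backA (fun j => v j ω) (fun j => u j ω) n (n - i)
      | MeasurableSpace.comap (fun ω (k : Fin (n + 1)) => v k ω) MeasurableSpace.pi]
      ≤ᵐ[μ]
    μ[fun ω => 1 / backA (fun j => v j ω) (fun j => u j ω) n (n - (i - 1))
      | MeasurableSpace.comap (fun ω (k : Fin (n + 1)) => v k ω) MeasurableSpace.pi] := by
  refine condExp_mono (hint i hin) (hint (i - 1) (by omega)) (ae_of_all μ fun ω => ?_)
  have hv : ∀ k, 0 < v k ω := fun k => hvpos k ω
  have hu₁ : ∀ k, u k ω ≤ 1 := fun k => (hu k ω).2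
  dsimp only
  rw [show n - (i - 1) = n - i + 1 by omega]
  exact one_div_le_one_div_of_le (backA_pos hv _ _) (backA_succ_le hv hu₁ (by omega))

/-- **Rao–Blackwellized backward estimators are nonincreasing (Lemma 4).** With
`Ŷ i = 1 / A (n - i)` and `Y i = E[Ŷ i | v 0, …, v n]` the conditional expectation given
the σ-algebra generated by the proposed weights, `Y i ≤ Y (i-1)` almost surely for
`1 ≤ i ≤ n`. -/
theorem rbbce_nonincreasing
    {Ω : Type*} [MeasurableSpace Ω] (μ : Measure Ω) [IsProbabilityMeasure μ]
    (n : ℕ) (v u : ℕ → Ω → ℝ)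
    (hvmeas : ∀ k, Measurable (v k)) (humeas : ∀ k, Measurable (u k))
    (hvpos : ∀ k ω, 0 < v k ω) (hu : ∀ k ω, u k ω ∈ Set.Icc (0 : ℝ) 1)
    (hint : ∀ i, i ≤ n → Integrable
      (fun ω => 1 / backA (fun j => v j ω) (fun j => u j ω) n (n - i)) μ)
    (i : ℕ) (hi1 : 1 ≤ i) (hin : i ≤ n) :
    μ[fun ω => 1 / backA (fun j => v j ω) (fun j => u j ω) n (n - i)
      | MeasurableSpace.comap (fun ω (k : Fin (n + 1)) => v k ω) MeasurableSpace.pi]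
      ≤ᵐ[μ]
    μ[fun ω => 1 / backA (fun j => v j ω) (fun j => u j ω) n (n - (i - 1))
      | MeasurableSpace.comap (fun ω (k : Fin (n + 1)) => v k ω) MeasurableSpace.pi] :=
  rbbce_nonincreasing_general μ n v u hvpos hu hint i hi1 hin
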